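/- arXiv:2312.06478 — 2 statements merged into one kernel-verified Lean document; each statement's English description precedes it below -/
import Mathlib

section
/- Let S ∈ ℝ^d and F ∈ ℝ^q be square-integrable random vectors with Cov(F) positive definite, η ∈ (0,1], γ ∈ (-2η,0), and Γ(γ) = Cov(S) + (γ²/η + 2γ)·Cov(S,F)Cov(F)⁻¹Cov(F,S). If c ∈ ℝ^d satisfies cᵀCov(S,F) ≠ 0, then cᵀΓ(γ)c < cᵀCov(S)c. -/
open MeasureTheory Matrix

variable {Ω : Type*} [MeasurableSpace Ω]

/-- Componentwise mean of a random vector. -/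
noncomputable def mvMean (μ : MeasureTheory.Measure Ω) {d : ℕ} (S : Ω → Fin d → ℝ) : Fin d → ℝ :=
  fun i => ∫ ω, S ω i ∂μ

/-- Cross-covariance matrix Cov(S, F) = E[(S - E S)(F - E F)ᵀ]. -/
noncomputable def mvCov (μ : MeasureTheory.Measure Ω) {d q : ℕ}
    (S : Ω → Fin d → ℝ) (F : Ω → Fin q → ℝ) : Matrix (Fin d) (Fin q) ℝ :=
  Matrix.of fun i j => ∫ ω, (S ω i - mvMean μ S i) * (F ω j - mvMean μ F j) ∂μ

/-- If cᵀCov(S,F) ≠ 0 then cᵀΓ(γ)c < cᵀCov(S)c for γ ∈ (-2η,0), where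
Γ(γ) = Cov(S) + (γ²/η + 2γ)·Cov(S,F)Cov(F)⁻¹Cov(F,S). -/
theorem stmt7 (μ : Measure Ω) [IsProbabilityMeasure μ] {d q : ℕ}
    (S : Ω → Fin d → ℝ) (F : Ω → Fin q → ℝ)
    (hS : ∀ i, MemLp (fun ω => S ω i) 2 μ) (hF : ∀ j, MemLp (fun ω => F ω j) 2 μ)
    (hPD : (mvCov μ F F).PosDef)
    (η γ : ℝ) (hη : 0 < η) (hη1 : η ≤ 1) (hγl : -2 * η < γ) (hγu : γ < 0)
    (c : Fin d → ℝ) (hc : c ᵥ* mvCov μ S F ≠ 0) :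
    c ⬝ᵥ (mvCov μ S S +
        (γ ^ 2 / η + 2 * γ) • (mvCov μ S F * (mvCov μ F F)⁻¹ * mvCov μ F S)).mulVec c <
      c ⬝ᵥ (mvCov μ S S).mulVec c := by
 -- proof
  have hT : mvCov μ F S = (mvCov μ S F)ᵀ := by
    ext i j
    simp only [mvCov, Matrix.transpose_apply, Matrix.of_apply]
    congr 1; ext ω; ring
  set v := c ᵥ* mvCov μ S F with hv
  have hinv : ((mvCov μ F F)⁻¹).PosDef := hPD.inv
  have hq : c ⬝ᵥ (mvCov μ S F * (mvCov μ F F)⁻¹ * mvCov μ F S).mulVec c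
      = v ⬝ᵥ ((mvCov μ F F)⁻¹).mulVec v := by
    rw [hT, ← Matrix.mulVec_mulVec, Matrix.mulVec_transpose, ← hv,
      Matrix.dotProduct_mulVec, ← Matrix.vecMul_vecMul, ← hv, ← Matrix.dotProduct_mulVec]
  have hqpos : 0 < v ⬝ᵥ ((mvCov μ F F)⁻¹).mulVec v := by
    have := hinv.dotProduct_mulVec_pos hc
    simpa using this
  have hk : γ ^ 2 / η + 2 * γ < 0 := by
    rw [div_add' _ _ _ (ne_of_gt hη)]
    apply div_neg_of_neg_of_pos _ hη
    nlinarith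
  rw [Matrix.add_mulVec, dotProduct_add, Matrix.smul_mulVec,
    dotProduct_smul]
  have : (γ ^ 2 / η + 2 * γ) • (c ⬝ᵥ (mvCov μ S F * (mvCov μ F F)⁻¹ * mvCov μ F S).mulVec c) < 0 := by
    rw [hq, smul_eq_mul]
    exact mul_neg_of_neg_of_pos hk hqpos
  linarith
end

section
/- Let S and F be square-integrable random vectors in ℝ^d and ℝ^q with Cov(F) invertible, let η ∈ (0,1], M = Cov(S,F)Cov(F)⁻¹Cov(F,S), and Γ(γ) = Cov(S) + (γ²/η + 2γ)M. Then for every γ ∈ ℝ, Γ(γ) - Γ(-η) = (1/η)(γ + η)²·M is positive semi-definite; hence Γ(-η) ⪯ Γ(γ) in the Loewner order for all γ. -/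
open MeasureTheory Matrix

variable {Ω : Type*} [MeasurableSpace Ω]

/-! The gap Γ(γ) − Γ(−η) is the scalar multiple (γ + η)²/η of M = C Σ⁻¹ Cᵀ, where
C = Cov(S, F) and Σ = Cov(F). The quadratic form of Σ at x is the variance of ⟪x, F⟫, so Σ,
hence Σ⁻¹ and C Σ⁻¹ Cᵀ, are positive semidefinite. -/

open ProbabilityTheory

section Covariance

variable (μ : Measure Ω) {d q : ℕ} (S : Ω → Fin d → ℝ) (F : Ω → Fin q → ℝ)

lemma mvCov_apply (i : Fin d) (j : Fin q) :
    mvCov μ S F i j = cov[fun ω ↦ S ω i, fun ω ↦ F ω j; μ] :=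
  rfl

lemma mvCov_swap : mvCov μ F S = (mvCov μ S F)ᵀ := by
  ext j i
  rw [transpose_apply, mvCov_apply, mvCov_apply, covariance_comm]

lemma mvCov_self_posSemidef [IsFiniteMeasure μ] (hF : ∀ j, MemLp (fun ω ↦ F ω j) 2 μ) :
    (mvCov μ F F).PosSemidef := by
  refine .of_dotProduct_mulVec_nonneg ?_ fun x ↦ ?_
  · rw [IsHermitian, conjTranspose_eq_transpose_of_trivial, ← mvCov_swap]
  have hxF : ∀ j, MemLp (fun ω ↦ x j * F ω j) 2 μ := fun j ↦ (hF j).const_mul (x j)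
  have hquad : star x ⬝ᵥ mvCov μ F F *ᵥ x =
      cov[fun ω ↦ ∑ i, x i * F ω i, fun ω ↦ ∑ j, x j * F ω j; μ] := by
    simp only [covariance_fun_sum_fun_sum hxF hxF, covariance_const_mul_left,
      covariance_const_mul_right, dotProduct, mulVec, star_trivial, mvCov_apply,
      Finset.mul_sum]
    refine Finset.sum_congr rfl fun i _ ↦ Finset.sum_congr rfl fun j _ ↦ ?_
    ring
  rw [hquad]
  exact integral_nonneg fun ω ↦ mul_self_nonneg _

lemma mvCov_mul_inv_mul_posSemidef [IsFiniteMeasure μ] (hF : ∀ j, MemLp (fun ω ↦ F ω j) 2 μ) :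
    (mvCov μ S F * (mvCov μ F F)⁻¹ * mvCov μ F S).PosSemidef := by
  rw [mvCov_swap μ S F, ← conjTranspose_eq_transpose_of_trivial]
  exact (mvCov_self_posSemidef μ F hF).inv.mul_mul_conjTranspose_same _

end Covariance

lemma add_smul_sub_add_smul_eq_sq_smul {E : Type*} [AddCommGroup E] [Module ℝ E] (A M : E)
    {η : ℝ} (hη : η ≠ 0) (γ : ℝ) :
    (A + (γ ^ 2 / η + 2 * γ) • M) - (A + ((-η) ^ 2 / η + 2 * (-η)) • M) =
      ((1 / η) * (γ + η) ^ 2) • M := by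
  rw [add_sub_add_left_eq_sub, ← sub_smul]
  congr 1
  field_simp
  ring

theorem stmt14_general (μ : Measure Ω) [IsProbabilityMeasure μ] {d q : ℕ}
    (S : Ω → Fin d → ℝ) (F : Ω → Fin q → ℝ)
    (hF : ∀ j, MemLp (fun ω => F ω j) 2 μ)
    (η : ℝ) (hη : 0 < η) :
    ∀ γ : ℝ,
      ((mvCov μ S S +
          (γ ^ 2 / η + 2 * γ) • (mvCov μ S F * (mvCov μ F F)⁻¹ * mvCov μ F S)) -
        (mvCov μ S S +
          ((-η) ^ 2 / η + 2 * (-η)) • (mvCov μ S F * (mvCov μ F F)⁻¹ * mvCov μ F S)) =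
        ((1 / η) * (γ + η) ^ 2) • (mvCov μ S F * (mvCov μ F F)⁻¹ * mvCov μ F S)) ∧
      ((mvCov μ S S +
          (γ ^ 2 / η + 2 * γ) • (mvCov μ S F * (mvCov μ F F)⁻¹ * mvCov μ F S)) -
        (mvCov μ S S +
          ((-η) ^ 2 / η + 2 * (-η)) • (mvCov μ S F * (mvCov μ F F)⁻¹ * mvCov μ F S))).PosSemidef := by
  intro γ
  have hgap := add_smul_sub_add_smul_eq_sq_smul (mvCov μ S S)
    (mvCov μ S F * (mvCov μ F F)⁻¹ * mvCov μ F S) hη.ne' γ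
  refine ⟨hgap, hgap ▸ ?_⟩
  exact (mvCov_mul_inv_mul_posSemidef μ S F hF).smul (by positivity)

/-- Γ(γ) - Γ(-η) = (1/η)(γ+η)²·M is positive semi-definite for every γ, where
M = Cov(S,F)Cov(F)⁻¹Cov(F,S); hence γ = -η is Loewner-optimal. -/
theorem stmt14 (μ : Measure Ω) [IsProbabilityMeasure μ] {d q : ℕ}
    (S : Ω → Fin d → ℝ) (F : Ω → Fin q → ℝ)
    (hS : ∀ i, MemLp (fun ω => S ω i) 2 μ) (hF : ∀ j, MemLp (fun ω => F ω j) 2 μ)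
    (hinv : IsUnit (mvCov μ F F))
    (η : ℝ) (hη : 0 < η) (hη1 : η ≤ 1) :
    ∀ γ : ℝ,
      ((mvCov μ S S +
          (γ ^ 2 / η + 2 * γ) • (mvCov μ S F * (mvCov μ F F)⁻¹ * mvCov μ F S)) -
        (mvCov μ S S +
          ((-η) ^ 2 / η + 2 * (-η)) • (mvCov μ S F * (mvCov μ F F)⁻¹ * mvCov μ F S)) =
        ((1 / η) * (γ + η) ^ 2) • (mvCov μ S F * (mvCov μ F F)⁻¹ * mvCov μ F S)) ∧
      ((mvCov μ S S +
          (γ ^ 2 / η + 2 * γ) • (mvCov μ S F * (mvCov μ F F)⁻¹ * mvCov μ F S)) -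
        (mvCov μ S S +
          ((-η) ^ 2 / η + 2 * (-η)) • (mvCov μ S F * (mvCov μ F F)⁻¹ * mvCov μ F S))).PosSemidef :=
  stmt14_general μ S F hF η hη
end
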